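/- arXiv:math/0610470 — 2 statements merged into one kernel-verified Lean document; each statement's English description precedes it below -/
import Mathlib

section
/- Let I be a stable monomial ideal of S = K[x_1,...,x_n]. Then max{ m(u) : u ∈ G(I) } ≤ |G(I)|. -/
/-!
Background definitions: monomial ideals, minimal monomial generators, stable / lexsegment /
universal lexsegment ideals, (graded) Betti numbers `β_{i}` and `β_{ij}` of an ideal
(via Koszul homology, using `Tor_i^S(M,K) ≅ H_i(x_1,…,x_n; M)` as graded vector spaces),
Gotzmann and componentwise linear ideals, generic initial ideals, grade and
projective dimension.
-/

open MvPolynomial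

namespace Formalization

variable {K : Type} [Field K] {σ : Type} [Fintype σ] [LinearOrder σ] {n : ℕ}

/-- The total degree of an exponent vector (the degree of the corresponding monomial). -/
def edeg (d : σ →₀ ℕ) : ℕ := d.sum fun _ k => k

/-- An ideal of the polynomial ring is a *monomial ideal* if it is generated by monomials. -/
def IsMonomialIdeal (I : Ideal (MvPolynomial σ K)) : Prop :=
  ∃ A : Set (σ →₀ ℕ), I = Ideal.span ((fun d => (monomial d (1 : K))) '' A)

/-- `G(I)`: the (exponent vectors of the) unique minimal system of monomial generators of a
monomial ideal `I`, i.e. the monomials of `I` having no proper monomial divisor in `I`. -/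
def minGens (I : Ideal (MvPolynomial σ K)) : Set (σ →₀ ℕ) :=
  {d | monomial d (1 : K) ∈ I ∧
    ∀ e : σ →₀ ℕ, e ≤ d → e ≠ d → monomial e (1 : K) ∉ I}

/-- `m(u)`: the largest index (1-indexed, as in `x_1, …, x_n`) of a variable dividing the
monomial with exponent vector `u`. -/
def mdeg (d : Fin n →₀ ℕ) : ℕ := d.support.sup fun i => (i : ℕ) + 1

/-- `m_i(I) = |{u ∈ G(I) : m(u) = i}|`. -/
noncomputable def mcount (I : Ideal (MvPolynomial (Fin n) K)) (i : ℕ) : ℕ :=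
  {u ∈ minGens I | mdeg u = i}.ncard

/-- A monomial ideal is *stable* if for every monomial `u ∈ I` with largest variable
index `j = m(u)` and every `i < j`, the monomial `x_i · u / x_j` belongs to `I`. -/
def IsStable (I : Ideal (MvPolynomial σ K)) : Prop :=
  IsMonomialIdeal I ∧
    ∀ d : σ →₀ ℕ, monomial d (1 : K) ∈ I →
      ∀ j ∈ d.support, (∀ k ∈ d.support, k ≤ j) →
        ∀ i : σ, i < j →
          monomial (d + Finsupp.single i 1 - Finsupp.single j 1) (1 : K) ∈ I

/-- `u <_lex v` for the lexicographic order induced by `x_1 > x_2 > ⋯`: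
at the smallest index where the exponent vectors differ, `v` has the larger exponent. -/
def lexLt (u v : σ →₀ ℕ) : Prop :=
  ∃ i : σ, (∀ j : σ, j < i → u j = v j) ∧ u i < v i

/-- A monomial ideal `I` is *lexsegment* if `u ∈ I`, `deg v = deg u` and `v ≥_lex u`
imply `v ∈ I`. -/
def IsLexsegment (I : Ideal (MvPolynomial σ K)) : Prop :=
  IsMonomialIdeal I ∧
    ∀ u v : σ →₀ ℕ, monomial u (1 : K) ∈ I → edeg v = edeg u →
      (lexLt u v ∨ u = v) → monomial v (1 : K) ∈ I

/-- A lexsegment ideal `I ⊆ K[x_1,…,x_n]` is *universal lexsegment* if for every `m ≥ 1` the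
extension ideal of `K[x_1,…,x_{n+m}]` generated by `I` (equivalently, by the minimal monomial
generators of `I`) is again lexsegment. -/
def IsUniversalLex (I : Ideal (MvPolynomial (Fin n) K)) : Prop :=
  IsLexsegment I ∧
    ∀ m : ℕ, 1 ≤ m →
      IsLexsegment (Ideal.map (rename (R := K) (Fin.castLE (Nat.le_add_right n m))) I)

/-- An ideal is homogeneous if it contains all homogeneous components of its elements. -/
def IsHomogeneousIdeal (I : Ideal (MvPolynomial σ K)) : Prop :=
  ∀ p ∈ I, ∀ j : ℕ, homogeneousComponent j p ∈ I

/-- The homogeneous component of degree `d ∈ ℤ` of an ideal `I`, as a `K`-subspace: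
the homogeneous polynomials of degree `d` belonging to `I` (zero if `d < 0`). -/
def hdeg (I : Ideal (MvPolynomial σ K)) (d : ℤ) : Submodule K (MvPolynomial σ K) where
  carrier := {p | p = 0 ∨ (p ∈ I ∧ ∃ e : ℕ, (e : ℤ) = d ∧ p.IsHomogeneous e)}
  zero_mem' := Or.inl rfl
  add_mem' := by
    rintro p q (rfl | ⟨hpI, e, he, hpe⟩) (rfl | ⟨hqI, e', he', hqe⟩)
    · simp
    · simpa using Or.inr ⟨‹_›, e', he', hqe⟩
    · simpa using Or.inr ⟨hpI, e, he, hpe⟩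
    · refine Or.inr ⟨add_mem hpI hqI, e, he, hpe.add ?_⟩
      obtain rfl : e' = e := by omega
      exact hqe
  smul_mem' := by
    rintro c p (rfl | ⟨hpI, e, he, hpe⟩)
    · exact Or.inl (smul_zero c)
    · refine Or.inr ⟨?_, e, he, ?_⟩
      · simpa [smul_eq_C_mul] using Ideal.mul_mem_left I _ hpI
      · simpa [smul_eq_C_mul] using (isHomogeneous_C σ c).mul hpe

/-- Two ideals have the same Hilbert function. -/
def HilbertEq (I L : Ideal (MvPolynomial σ K)) : Prop :=
  ∀ d : ℕ, Module.rank K (hdeg I (d : ℤ)) = Module.rank K (hdeg L (d : ℤ))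

/-! ### Betti numbers via Koszul homology

For a module `M` over `S = K[x_1,…,x_n]` one has `Tor_i^S(M, K) ≅ H_i(x_1,…,x_n; M)`,
the `i`-th homology of the Koszul complex with coefficients in `M`, compatibly with the
grading.  We use this to define the Betti numbers `β_i(I) = dim_K Tor_i^S(I, K)` and the
graded Betti numbers `β_{ij}(I) = dim_K Tor_i^S(I, K)_j` of an ideal `I`. -/

/-- The space of `i`-th Koszul chains with polynomial coefficients: functions on the
`i`-element subsets of the variables (a basis of `Λ^i S^n`). -/
abbrev KChain (σ K : Type) [Fintype σ] [LinearOrder σ] [Field K] (i : ℕ) : Type :=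
  {s : Finset σ // s.card = i} → MvPolynomial σ K

/-- The Koszul differential `K_{i+1} → K_i`. -/
noncomputable def KD (i : ℕ) (f : KChain σ K (i + 1)) : KChain σ K i :=
  fun t => ∑ a ∈ (t.1)ᶜ.attach,
    ((-1 : K) ^ (t.1.filter (fun b => b < a.1)).card) •
      (X a.1 * f ⟨insert a.1 t.1, by
        rw [Finset.card_insert_of_notMem (Finset.mem_compl.mp a.2), t.2]⟩)

/-- The `K`-subspace of Koszul `i`-cycles with coefficients in a `K`-subspace `V ⊆ S`. -/
noncomputable def KZ (V : Submodule K (MvPolynomial σ K)) (i : ℕ) :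
    Submodule K (KChain σ K i) where
  carrier := {f | (∀ s, f s ∈ V) ∧
    ∀ (t : Finset σ) (ht : t.card + 1 = i),
      ∑ a ∈ tᶜ.attach,
        ((-1 : K) ^ (t.filter (fun b => b < a.1)).card) •
          (X a.1 * f ⟨insert a.1 t, by
            rw [Finset.card_insert_of_notMem (Finset.mem_compl.mp a.2)]; exact ht⟩) = 0}
  zero_mem' := by
    refine ⟨fun s => zero_mem V, fun t ht => ?_⟩
    simp
  add_mem' := by
    rintro f g ⟨hf1, hf2⟩ ⟨hg1, hg2⟩
    refine ⟨fun s => add_mem (hf1 s) (hg1 s), fun t ht => ?_⟩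
    simp only [Pi.add_apply, mul_add, smul_add, Finset.sum_add_distrib,
      hf2 t ht, hg2 t ht, add_zero]
  smul_mem' := by
    rintro c f ⟨hf1, hf2⟩
    refine ⟨fun s => Submodule.smul_mem V c (hf1 s), fun t ht => ?_⟩
    have h := hf2 t ht
    calc ∑ a ∈ tᶜ.attach,
        ((-1 : K) ^ (t.filter (fun b => b < a.1)).card) •
          (X a.1 * (c • f) ⟨insert a.1 t, by
            rw [Finset.card_insert_of_notMem (Finset.mem_compl.mp a.2)]; exact ht⟩)
        = c • ∑ a ∈ tᶜ.attach,
          ((-1 : K) ^ (t.filter (fun b => b < a.1)).card) •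
            (X a.1 * f ⟨insert a.1 t, by
              rw [Finset.card_insert_of_notMem (Finset.mem_compl.mp a.2)]; exact ht⟩) := by
          rw [Finset.smul_sum]
          refine Finset.sum_congr rfl fun a _ => ?_
          rw [Pi.smul_apply, mul_smul_comm, smul_comm]
      _ = 0 := by rw [h, smul_zero]

/-- The `K`-subspace of Koszul `i`-boundaries coming from `(i+1)`-chains with coefficients
in a `K`-subspace `W ⊆ S`. -/
noncomputable def KB (W : Submodule K (MvPolynomial σ K)) (i : ℕ) :
    Submodule K (KChain σ K i) :=
  Submodule.span K (KD i '' {f | ∀ s, f s ∈ W})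

/-- The dimension of the `i`-th Koszul homology of the subcomplex of Koszul chains with
coefficients in `V i` in homological degree `i`. -/
noncomputable def koszulBetti (V : ℕ → Submodule K (MvPolynomial σ K)) (i : ℕ) : Cardinal :=
  Module.rank K
    (↥(KZ (V i) i) ⧸ (Submodule.comap (KZ (V i) i).subtype (KB (V (i + 1)) i)))

/-- The `i`-th total Betti number `β_i(I) = dim_K Tor_i^S(I, K)` of an ideal `I`, computed
as the `i`-th Koszul homology of `I`. -/
noncomputable def betti (I : Ideal (MvPolynomial σ K)) (i : ℕ) : Cardinal :=
  koszulBetti (fun _ => I.restrictScalars K) i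

/-- The graded Betti number `β_{ij}(I) = dim_K Tor_i^S(I, K)_j` of an ideal `I`, computed as
the degree-`j` strand of the `i`-th Koszul homology of `I` (the Koszul generator `e_{l_1} ∧ ⋯
∧ e_{l_k}` sits in internal degree `k`, so the coefficients in homological degree `k` lie in
the degree `j - k` component of `I`). -/
noncomputable def bettiGr (I : Ideal (MvPolynomial σ K)) (i j : ℕ) : Cardinal :=
  koszulBetti (fun k => hdeg I ((j : ℤ) - (k : ℤ))) i

/-- A homogeneous ideal `I` is *Gotzmann* if `β_{ij}(I) = β_{ij}(I^lex)` for all `i, j`, where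
`I^lex` is the (unique) lexsegment ideal with the same Hilbert function as `I`. -/
def IsGotzmann (I : Ideal (MvPolynomial σ K)) : Prop :=
  ∀ L : Ideal (MvPolynomial σ K), IsLexsegment L → HilbertEq I L →
    ∀ i j : ℕ, bettiGr I i j = bettiGr L i j

/-- `I_{⟨j⟩}`: the ideal generated by the degree-`j` homogeneous elements of `I`. -/
noncomputable def componentIdeal (I : Ideal (MvPolynomial σ K)) (j : ℕ) : Ideal (MvPolynomial σ K) :=
  Ideal.span {p | p ∈ I ∧ p.IsHomogeneous j}

/-- A homogeneous ideal `I` is *componentwise linear* if for each `j` the ideal `I_{⟨j⟩}` has a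
linear resolution, i.e. its graded Betti numbers `β_{ik}` vanish for `k ≠ i + j`. -/
def IsComponentwiseLinear (I : Ideal (MvPolynomial σ K)) : Prop :=
  ∀ j i k : ℕ, k ≠ i + j → bettiGr (componentIdeal I j) i k = 0

/-- `u <_revlex v` in the degree reverse lexicographic order induced by `x_1 > ⋯ > x_n`:
either `deg u < deg v`, or the degrees agree and at the *largest* index where the exponent
vectors differ, `u` has the larger exponent. -/
def revlexLt (u v : σ →₀ ℕ) : Prop :=
  (edeg u < edeg v) ∨
    (edeg u = edeg v ∧ ∃ i : σ, v i < u i ∧ ∀ j : σ, i < j → u j = v j)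

/-- `d` is the exponent vector of the leading monomial of `p` for the revlex order. -/
def IsLeadMonomial (p : MvPolynomial σ K) (d : σ →₀ ℕ) : Prop :=
  d ∈ p.support ∧ ∀ e ∈ p.support, e ≠ d → revlexLt e d

/-- The initial ideal with respect to the reverse lexicographic order. -/
noncomputable def initialIdeal (I : Ideal (MvPolynomial σ K)) : Ideal (MvPolynomial σ K) :=
  Ideal.span {q | ∃ p ∈ I, ∃ d : σ →₀ ℕ, IsLeadMonomial p d ∧ q = monomial d (1 : K)}

/-- The linear change of coordinates associated to a matrix `g`. -/
noncomputable def linChange (g : Matrix (Fin n) (Fin n) K) :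
    MvPolynomial (Fin n) K →ₐ[K] MvPolynomial (Fin n) K :=
  aeval fun i => ∑ j, g i j • X j

/-- `J = Gin(I)`, the generic initial ideal of `I` with respect to the reverse lexicographic
order: `J = in(g·I)` for all `g` in a nonempty Zariski-open subset of `GL_n(K)`. -/
def IsGin (I J : Ideal (MvPolynomial (Fin n) K)) : Prop :=
  ∃ f : MvPolynomial (Fin n × Fin n) K,
    (∃ g : Matrix (Fin n) (Fin n) K, IsUnit g.det ∧ eval (fun p => g p.1 p.2) f ≠ 0) ∧
    ∀ g : Matrix (Fin n) (Fin n) K, IsUnit g.det →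
      eval (fun p => g p.1 p.2) f ≠ 0 →
        initialIdeal (Ideal.map (linChange g) I) = J

/-- `grade I = g`: `I` contains a regular sequence (on `S`) of length `g` and none of
length `g + 1`. -/
def HasGrade (I : Ideal (MvPolynomial σ K)) (g : ℕ) : Prop :=
  (∃ rs : List (MvPolynomial σ K), rs.length = g ∧ (∀ r ∈ rs, r ∈ I) ∧
      RingTheory.Sequence.IsRegular (MvPolynomial σ K) rs) ∧
    ¬ ∃ rs : List (MvPolynomial σ K), rs.length = g + 1 ∧ (∀ r ∈ rs, r ∈ I) ∧
      RingTheory.Sequence.IsRegular (MvPolynomial σ K) rs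

open CategoryTheory in
/-- The projective dimension of a module is at most `p`: there is a projective resolution
vanishing beyond `p`. -/
def ProjDimLE {R : Type} [CommRing R] (M : ModuleCat R) (p : ℕ) : Prop :=
  ∃ P : ProjectiveResolution M, ∀ i : ℕ, p < i → Limits.IsZero (P.complex.X i)

/-- The projective dimension of a module equals `p`. -/
def ProjDimEq {R : Type} [CommRing R] (M : ModuleCat R) (p : ℕ) : Prop :=
  ProjDimLE M p ∧ ∀ q : ℕ, q < p → ¬ ProjDimLE M q

/-- `I` is a complete intersection: it is generated by a regular sequence. -/
def IsCompleteIntersection (I : Ideal (MvPolynomial σ K)) : Prop :=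
  ∃ rs : List (MvPolynomial σ K),
    RingTheory.Sequence.IsRegular (MvPolynomial σ K) rs ∧ I = Ideal.ofList rs

/-!
For `u ∈ G(I)` with `j = m(u)` and each `i < j`, stability puts `x_i u / x_j` in `I`, so some
`v_i ∈ G(I)` divides it. Since `u` is minimal, `v_i` does not divide `u`; this forces
`deg_{x_i} v_i = deg_{x_i} u + 1`, while `deg_{x_k} v_i ≤ deg_{x_k} u` for `k ≠ i`. Hence
`v_1, …, v_{j-1}, u` are `j` distinct elements of `G(I)`.
-/

theorem exists_mem_minGens_le {σ : Type} {I : Ideal (MvPolynomial σ K)} {w : σ →₀ ℕ}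
    (hw : monomial w (1 : K) ∈ I) : ∃ v ∈ minGens I, v ≤ w := by
  obtain ⟨v, ⟨hvw, hvI⟩, hmin⟩ :=
    wellFounded_lt.has_min {e | e ≤ w ∧ monomial e (1 : K) ∈ I} ⟨w, le_rfl, hw⟩
  exact ⟨v, ⟨hvI, fun e hev hne heI => hmin e ⟨hev.trans hvw, heI⟩ (lt_of_le_of_ne hev hne)⟩, hvw⟩

theorem minGens_finite {σ : Type} [Finite σ] (I : Ideal (MvPolynomial σ K)) :
    (minGens I).Finite :=
  IsAntichain.finite_of_partiallyWellOrderedOn (r := (· ≤ ·))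
    (fun d hd _ he hne hle => he.2 d hle hne hd.1) (Set.isPWO_of_wellQuasiOrderedLE _)

theorem apply_eq_add_one_of_le_add_single {σ : Type} {I : Ideal (MvPolynomial σ K)}
    {u v : σ →₀ ℕ} (hu : u ∈ minGens I) (hv : monomial v (1 : K) ∈ I) {i : σ}
    (hle : v ≤ u + Finsupp.single i 1) (hne : v ≠ u) : v i = u i + 1 := by
  classical
  by_contra hvi
  refine hu.2 v (fun k => ?_) hne hv
  have hk := hle k
  simp only [Finsupp.add_apply, Finsupp.single_apply] at hk
  split_ifs at hk with hik
  · subst hik; omega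
  · omega

theorem IsStable.exists_mem_minGens_apply_eq {σ : Type} [LinearOrder σ]
    {I : Ideal (MvPolynomial σ K)} (hI : IsStable I) {u : σ →₀ ℕ} (hu : u ∈ minGens I)
    {j : σ} (hj : j ∈ u.support) (hjmax : ∀ k ∈ u.support, k ≤ j) {i : σ} (hij : i < j) :
    ∃ v ∈ minGens I, v ≤ u + Finsupp.single i 1 ∧ v i = u i + 1 := by
  obtain ⟨v, hv, hvw⟩ := exists_mem_minGens_le (hI.2 u hu.1 j hj hjmax i hij)
  have hvu : v ≤ u + Finsupp.single i 1 := hvw.trans tsub_le_self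
  have hvj : v j < u j := by
    have := hvw j
    simp only [Finsupp.tsub_apply, Finsupp.add_apply, Finsupp.single_eq_same,
      Finsupp.single_eq_of_ne hij.ne'] at this
    have := Finsupp.mem_support_iff.mp hj
    omega
  exact ⟨v, hv, hvu, apply_eq_add_one_of_le_add_single hu hv.1 hvu (by rintro rfl; omega)⟩

theorem IsStable.ncard_Iio_add_one_le {σ : Type} [LinearOrder σ] [Finite σ]
    {I : Ideal (MvPolynomial σ K)} (hI : IsStable I) {u : σ →₀ ℕ} (hu : u ∈ minGens I)
    {j : σ} (hj : j ∈ u.support) (hjmax : ∀ k ∈ u.support, k ≤ j) :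
    (Set.Iio j).ncard + 1 ≤ (minGens I).ncard := by
  choose! V hV hVle hVi using fun i (hi : i < j) => hI.exists_mem_minGens_apply_eq hu hj hjmax hi
  have hinj : Set.InjOn V (Set.Iio j) := fun a ha b hb hab => by
    by_contra hne
    have hba : V b a ≤ u a := by
      simpa [Finsupp.single_eq_of_ne hne] using hVle b hb a
    have := hVi a ha
    rw [hab] at this
    omega
  have hu_notin : u ∉ V '' Set.Iio j := by
    rintro ⟨a, ha, rfl⟩
    have := hVi a ha
    omega
  calc (Set.Iio j).ncard + 1 = (V '' Set.Iio j).ncard + 1 := by rw [hinj.ncard_image]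
    _ = (insert u (V '' Set.Iio j)).ncard := (Set.ncard_insert_of_notMem hu_notin).symm
    _ ≤ (minGens I).ncard :=
      Set.ncard_le_ncard (Set.insert_subset hu (Set.image_subset_iff.2 hV)) (minGens_finite I)

/-- Let `I` be a stable monomial ideal of `S = K[x_1,…,x_n]`.  Then
`max{ m(u) : u ∈ G(I) } ≤ |G(I)|`. -/
theorem stable_mdeg_le_card_minGens {K : Type} [Field K] {n : ℕ}
    (I : Ideal (MvPolynomial (Fin n) K)) (hI : IsStable I) :
    ∀ u ∈ minGens I, mdeg u ≤ (minGens I).ncard := by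
  intro u hu
  obtain hempty | hne := u.support.eq_empty_or_nonempty
  · simp [mdeg, hempty]
  set j := u.support.max' hne
  have hjmax : ∀ k ∈ u.support, k ≤ j := u.support.le_max'
  calc mdeg u ≤ (j : ℕ) + 1 := Finset.sup_le fun k hk => Nat.succ_le_succ (hjmax k hk)
    _ = (Set.Iio j).ncard + 1 := by rw [← Finset.coe_Iio, Set.ncard_coe_finset, Fin.card_Iio]
    _ ≤ (minGens I).ncard := hI.ncard_Iio_add_one_le hu (u.support.max'_mem hne) hjmax

end Formalization
end

section
/- Let I ⊆ m² be a universal lexsegment ideal of S = K[x_1,...,x_n]. Then I = x_1 · J for some monomial ideal J of S. -/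
/-!
Background definitions: monomial ideals, minimal monomial generators, stable / lexsegment /
universal lexsegment ideals, (graded) Betti numbers `β_{i}` and `β_{ij}` of an ideal
(via Koszul homology, using `Tor_i^S(M,K) ≅ H_i(x_1,…,x_n; M)` as graded vector spaces),
Gotzmann and componentwise linear ideals, generic initial ideals, grade and
projective dimension.
-/

open MvPolynomial

namespace Formalization

variable {K : Type} [Field K] {σ : Type} [Fintype σ] [LinearOrder σ] {n : ℕ}

lemma le_of_le_add_single_of_apply_eq_zero {ι : Type} {w x : ι →₀ ℕ} {j : ι} {k : ℕ}
    (h : w ≤ x + Finsupp.single j k) (hj : w j = 0) : w ≤ x := by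
  intro i
  by_cases hij : i = j
  · subst hij
    simp [hj]
  · simpa [Finsupp.single_apply, Ne.symm hij] using h i

lemma lexLt_of_apply_zero_lt {m : ℕ} {u v : Fin (m + 1) →₀ ℕ} (h : u 0 < v 0) : lexLt u v :=
  ⟨0, fun j hj => absurd hj (Fin.not_lt_zero j), h⟩

lemma IsMonomialIdeal.eq_span_monomials {ι : Type} {I : Ideal (MvPolynomial ι K)}
    (hI : IsMonomialIdeal I) :
    I = Ideal.span ((fun d => monomial d (1 : K)) '' {d | monomial d (1 : K) ∈ I}) := by
  refine le_antisymm ?_ (Ideal.span_le.mpr (by rintro _ ⟨d, hd, rfl⟩; exact hd))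
  obtain ⟨A, hA⟩ := hI
  conv_lhs => rw [hA]
  exact Ideal.span_mono (Set.image_mono fun a ha => hA ▸ Ideal.subset_span ⟨a, ha, rfl⟩)

lemma IsMonomialIdeal.exists_le_of_monomial_mem_map_rename {ι τ : Type}
    {I : Ideal (MvPolynomial ι K)} (hI : IsMonomialIdeal I) (f : ι → τ) {v : τ →₀ ℕ}
    (hv : monomial v (1 : K) ∈ Ideal.map (rename (R := K) f) I) :
    ∃ a, monomial a (1 : K) ∈ I ∧ a.mapDomain f ≤ v := by
  classical
  rw [hI.eq_span_monomials, Ideal.map_span, Set.image_image] at hv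
  simp_rw [rename_monomial] at hv
  rw [← Set.image_image (g := fun d => monomial d (1 : K)), mem_ideal_span_monomial_image] at hv
  obtain ⟨_, ⟨a, ha, rfl⟩, hle⟩ := hv v (by simp)
  exact ⟨a, ha, hle⟩

lemma IsMonomialIdeal.exists_eq_span_X_mul {ι : Type} {I : Ideal (MvPolynomial ι K)}
    (hI : IsMonomialIdeal I) (i : ι)
    (hdvd : ∀ d, monomial d (1 : K) ∈ I → Finsupp.single i 1 ≤ d) :
    ∃ J : Ideal (MvPolynomial ι K), IsMonomialIdeal J ∧ I = Ideal.span {X i} * J := by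
  refine ⟨_, ⟨(· - Finsupp.single i 1) '' {d | monomial d (1 : K) ∈ I}, rfl⟩, ?_⟩
  rw [Ideal.span_mul_span', Set.singleton_mul, Set.image_image, Set.image_image]
  conv_lhs => rw [hI.eq_span_monomials]
  refine congrArg Ideal.span (Set.image_congr fun d hd => ?_)
  rw [X, monomial_mul, one_mul, add_tsub_cancel_of_le (hdvd d hd)]

/-- If `x_1 ∤ u` for a monomial `u ∈ I` of degree `e`, then in `n + 1` variables
`x_1 x_{n+1}^{e-1} >_lex u` lies in the extension of `I`; a monomial of `I` dividing it
divides `x_1`, which is impossible inside `m²`. -/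
lemma IsUniversalLex.single_zero_le_of_monomial_mem {I : Ideal (MvPolynomial (Fin n) K)}
    (hn : 0 < n) (hulex : IsUniversalLex I) (hm2 : I ≤ idealOfVars (Fin n) K ^ 2)
    {d : Fin n →₀ ℕ} (hd : monomial d (1 : K) ∈ I) : Finsupp.single ⟨0, hn⟩ 1 ≤ d := by
  have two_le_degree : ∀ {a}, monomial a (1 : K) ∈ I → 2 ≤ a.degree := fun ha =>
    (monomial_mem_pow_idealOfVars_iff 2 _ one_ne_zero).mp (hm2 ha)
  set f : Fin n → Fin (n + 1) := Fin.castLE (Nat.le_add_right n 1)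
  have hf0 : f ⟨0, hn⟩ = 0 := rfl
  have hlast : Fin.last n ∉ Set.range f := by
    rintro ⟨i, hi⟩
    exact absurd (congrArg Fin.val hi) (by simp [f, i.isLt.ne])
  rw [Finsupp.single_le_iff, Nat.one_le_iff_ne_zero]
  intro hd0
  set v : Fin (n + 1) →₀ ℕ := Finsupp.single 0 1 + Finsupp.single (Fin.last n) (d.degree - 1)
  have hv : monomial v (1 : K) ∈ Ideal.map (rename (R := K) f) I := by
    refine (hulex.2 1 le_rfl).2 (d.mapDomain f) v ?_ ?_ (Or.inl (lexLt_of_apply_zero_lt ?_))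
    · rw [← rename_monomial]
      exact Ideal.mem_map_of_mem _ hd
    · change v.degree = (d.mapDomain f).degree
      have := two_le_degree hd
      simp only [v, map_add, Finsupp.degree_single, Finsupp.degree_mapDomain]
      omega
    · have hu0 : d.mapDomain f 0 = 0 := by
        rw [← hf0, Finsupp.mapDomain_apply (Fin.castLE_injective _), hd0]
      simp [v, hu0]
  obtain ⟨a, ha, hav⟩ := hulex.1.1.exists_le_of_monomial_mem_map_rename f hv
  have hle : a.mapDomain f ≤ Finsupp.single 0 1 :=
    le_of_le_add_single_of_apply_eq_zero hav (Finsupp.mapDomain_of_notMem_range _ _ hlast)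
  have ha_degree : a.degree ≤ 1 := by
    simpa only [Finsupp.degree_mapDomain, Finsupp.degree_single] using Finsupp.degree_mono hle
  exact absurd (two_le_degree ha) (by omega)

/-- Let `I ⊆ m²` be a universal lexsegment ideal of `S = K[x_1,…,x_n]`.
Then `I = x_1 · J` for some monomial ideal `J` of `S`. -/
theorem universalLex_in_m_sq_eq_x1_mul {K : Type} [Field K] {n : ℕ} (hn : 0 < n)
    (I : Ideal (MvPolynomial (Fin n) K)) (hulex : IsUniversalLex I)
    (hm2 : I ≤ (Ideal.span (Set.range (X (R := K) (σ := Fin n)))) ^ 2) :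
    ∃ J : Ideal (MvPolynomial (Fin n) K), IsMonomialIdeal J ∧
      I = Ideal.span {(X (⟨0, hn⟩ : Fin n) : MvPolynomial (Fin n) K)} * J :=
  hulex.1.1.exists_eq_span_X_mul _ fun _ hd => hulex.single_zero_le_of_monomial_mem hn hm2 hd

end Formalization
end
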